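/- Fix δ ∈ (0,1), assume the uniform convergence assumption holds with constants C1, C2, and assume additionally that P_1 = P_2 = ⋯ = P_T (the i.i.d. case). Let r̂ = 2^ĵ, where ĵ is the least integer j ≥ 0 such that either 2^{j+1} > T or ‖𝔔_T^{2^j} − 𝔔_T^{2^{j+1}}‖_F > 4·S(2^j, δ). Then with probability at least 1 − δ, ‖P_T − 𝔔_T^{r̂}‖_F ≤ 462·S(T, δ). -/

import Mathlib

open MeasureTheory ProbabilityTheory

/-- The discrepancy `‖P − Q‖_F`. -/
noncomputable def dF {ι Z : Type*} [MeasurableSpace Z] (F : ι → Z → ℝ)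
    (P Q : Measure Z) : ℝ :=
  ⨆ n, |(∫ z, F n z ∂P) - ∫ z, F n z ∂Q|

/-- The average distribution `P_T^r = (1/r)·Σ_{t=T−r+1}^T P_t`. -/
noncomputable def avgMeas {Z : Type*} [MeasurableSpace Z]
    (P : ℕ → Measure Z) (T r : ℕ) : Measure Z :=
  (r : ENNReal)⁻¹ • ∑ t ∈ Finset.Icc (T - r + 1) T, P t

/-- Empirical average `(1/r)·Σ_{t=T−r+1}^T f(Z_t(ω))`. -/
noncomputable def empAvg {Z Ω : Type*} (Zs : ℕ → Ω → Z) (T r : ℕ)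
    (f : Z → ℝ) (ω : Ω) : ℝ :=
  (r : ℝ)⁻¹ * ∑ t ∈ Finset.Icc (T - r + 1) T, f (Zs t ω)

/-- `‖P − 𝔔_T^r(ω)‖_F`. -/
noncomputable def dPE {ι Z Ω : Type*} [MeasurableSpace Z] (F : ι → Z → ℝ)
    (P : Measure Z) (Zs : ℕ → Ω → Z) (T r : ℕ) (ω : Ω) : ℝ :=
  ⨆ n, |(∫ z, F n z ∂P) - empAvg Zs T r (F n) ω|

/-- `‖𝔔_T^r(ω) − 𝔔_T^s(ω)‖_F`. -/
noncomputable def dEE {ι Z Ω : Type*} (F : ι → Z → ℝ) (Zs : ℕ → Ω → Z)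
    (T r s : ℕ) (ω : Ω) : ℝ :=
  ⨆ n, |empAvg Zs T r (F n) ω - empAvg Zs T s (F n) ω|

/-- `S(r, δ)`. -/
noncomputable def Sfun (C1 C2 r δ : ℝ) : ℝ :=
  (C1 + C2 * Real.sqrt (2 * Real.log (Real.pi ^ 2 / (6 * δ)))) / Real.sqrt r
    + C2 * Real.sqrt (2 * Real.log (Real.logb 2 r + 10) / r)

/-- `max_{0 ≤ t ≤ r−1} ‖P_T − P_{T−t}‖_F`. -/
noncomputable def maxDrift {ι Z : Type*} [MeasurableSpace Z] (F : ι → Z → ℝ)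
    (P : ℕ → Measure Z) (T r : ℕ) : ℝ :=
  ⨆ t : Fin r, dF F (P T) (P (T - (t : ℕ)))

/-- The stopping condition of the adaptive algorithm at step `j`:
either the doubled window no longer fits the data, or the empirical
discrepancy between windows `2^j` and `2^{j+1}` exceeds `4·S(2^j, δ)`. -/
def stopCond {ι Z Ω : Type*} (F : ι → Z → ℝ) (Zs : ℕ → Ω → Z)
    (T : ℕ) (C1 C2 δ : ℝ) (j : ℕ) (ω : Ω) : Prop :=
  2 ^ (j + 1) > T ∨
    dEE F Zs T (2 ^ j) (2 ^ (j + 1)) ω > 4 * Sfun C1 C2 (2 ^ j : ℕ) δ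

/-! In the i.i.d. case every window average `P_T^r` equals `P_T`. Applying the uniform
convergence bound at each dyadic window `2^j ≤ T` with confidence `6δ / (π² (j+1)²)`, all these
bounds hold simultaneously with probability at least `1 - δ` (as `∑ 1/n² = π²/6`), and on that
event `‖P_T − 𝔔_T^{2^j}‖_F ≤ S(2^j, δ)` for every such `j`. The triangle inequality and
`S(2^{j+1}, δ) ≤ S(2^j, δ)` then keep every test statistic below `4 S(2^j, δ)`, so the
algorithm only stops once the doubled window no longer fits: `r̂ ≤ T < 2 r̂`, whence
`S(r̂, δ) ≤ 2 S(T, δ)`. -/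

section Rates

open Real

variable {C1 C2 δ : ℝ}

lemma sqrt_add_le_sqrt_add_sqrt {a b : ℝ} (ha : 0 ≤ a) (hb : 0 ≤ b) : √(a + b) ≤ √a + √b := by
  rw [sqrt_le_left (by positivity)]
  nlinarith [sq_sqrt ha, sq_sqrt hb, mul_nonneg (sqrt_nonneg a) (sqrt_nonneg b)]

lemma sqrt_le_two_mul_sqrt {a b : ℝ} (hb : 0 ≤ b) (h : a ≤ 4 * b) : √a ≤ 2 * √b := by
  rw [sqrt_le_left (by positivity)]
  nlinarith [sq_sqrt hb]

lemma Sfun_nonneg (hC1 : 0 ≤ C1) (hC2 : 0 ≤ C2) (r : ℝ) : 0 ≤ Sfun C1 C2 r δ := by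
  unfold Sfun
  positivity

lemma Sfun_two_mul_le (hC1 : 0 ≤ C1) (hC2 : 0 ≤ C2) {r : ℝ} (hr : 1 ≤ r) :
    Sfun C1 C2 (2 * r) δ ≤ Sfun C1 C2 r δ := by
  set L := logb 2 r
  have hL : 0 ≤ L := logb_nonneg one_lt_two hr
  have hlogb : logb 2 (2 * r) = L + 1 := by
    rw [logb_mul two_ne_zero (by positivity), logb_self_eq_one one_lt_two, add_comm]
  have hlog : log (L + 1 + 10) ≤ 2 * log (L + 10) :=
    calc log (L + 1 + 10) ≤ log ((L + 10) ^ 2) := log_le_log (by positivity) (by nlinarith)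
      _ = 2 * log (L + 10) := by rw [log_pow]; norm_num
  have hr0 : 0 < r := by linarith
  unfold Sfun
  rw [hlogb]
  refine add_le_add (div_le_div_of_nonneg_left (by positivity) (sqrt_pos.2 hr0)
    (sqrt_le_sqrt (by linarith))) (mul_le_mul_of_nonneg_left (sqrt_le_sqrt ?_) hC2)
  rw [div_le_div_iff₀ (by positivity) hr0]
  nlinarith [log_nonneg (show (1 : ℝ) ≤ L + 10 by linarith)]

lemma Sfun_le_two_mul_Sfun (hC1 : 0 ≤ C1) (hC2 : 0 ≤ C2) {r s : ℝ} (hr : 1 ≤ r) (hrs : r ≤ s)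
    (hs : s ≤ 4 * r) : Sfun C1 C2 r δ ≤ 2 * Sfun C1 C2 s δ := by
  have hr0 : 0 < r := by linarith
  have hlogb : logb 2 r ≤ logb 2 s := logb_le_logb_of_le one_lt_two (by positivity) hrs
  have hlogr : 0 ≤ log (logb 2 r + 10) :=
    log_nonneg (by linarith [logb_nonneg one_lt_two hr])
  have hlog : log (logb 2 r + 10) ≤ log (logb 2 s + 10) :=
    log_le_log (by linarith [logb_nonneg one_lt_two hr]) (by linarith)
  have hfirst : √s ≤ 2 * √r := sqrt_le_two_mul_sqrt hr0.le hs
  have hsecond : √(2 * log (logb 2 r + 10) / r) ≤ 2 * √(2 * log (logb 2 s + 10) / s) := by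
    refine sqrt_le_two_mul_sqrt (div_nonneg (by linarith) (by linarith)) ?_
    rw [mul_div_assoc', div_le_div_iff₀ hr0 (by linarith)]
    nlinarith
  set N := C1 + C2 * √(2 * log (π ^ 2 / (6 * δ)))
  have hN : 0 ≤ N := by positivity
  have hr' : 0 < √r := sqrt_pos.2 hr0
  have hs' : 0 < √s := sqrt_pos.2 (by linarith)
  unfold Sfun
  have : N / √r ≤ 2 * (N / √s) := by
    rw [mul_div_assoc', div_le_div_iff₀ hr' hs']
    nlinarith
  nlinarith [mul_le_mul_of_nonneg_left hsecond hC2]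

noncomputable def failureProb (δ : ℝ) (j : ℕ) : ℝ := 6 * δ / (π ^ 2 * (j + 1) ^ 2)

lemma failureProb_pos (hδ : 0 < δ) (j : ℕ) : 0 < failureProb δ j := by
  unfold failureProb
  positivity

lemma failureProb_lt_one (hδ0 : 0 < δ) (hδ1 : δ < 1) (j : ℕ) : failureProb δ j < 1 := by
  have hπ : 9 < π ^ 2 := by nlinarith [pi_gt_three]
  have hj : (1 : ℝ) ≤ ((j : ℝ) + 1) ^ 2 := one_le_pow₀ (by linarith [j.cast_nonneg (α := ℝ)])
  rw [failureProb, div_lt_one (by positivity)]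
  nlinarith

lemma sum_range_inv_succ_sq_le (K : ℕ) :
    ∑ j ∈ Finset.range K, 1 / ((j : ℝ) + 1) ^ 2 ≤ π ^ 2 / 6 := by
  have h := sum_le_hasSum (Finset.range (K + 1)) (fun n _ => by positivity) hasSum_zeta_two
  rw [Finset.sum_range_succ'] at h
  simpa using h

lemma sum_failureProb_le (hδ : 0 ≤ δ) (K : ℕ) : ∑ j ∈ Finset.range K, failureProb δ j ≤ δ := by
  have hπ : 0 < π ^ 2 := by positivity
  calc ∑ j ∈ Finset.range K, failureProb δ j
      = 6 * δ / π ^ 2 * ∑ j ∈ Finset.range K, 1 / ((j : ℝ) + 1) ^ 2 := by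
        rw [Finset.mul_sum]
        refine Finset.sum_congr rfl fun j _ => ?_
        rw [failureProb]
        field_simp
    _ ≤ 6 * δ / π ^ 2 * (π ^ 2 / 6) := by gcongr; exact sum_range_inv_succ_sq_le K
    _ = δ := by field_simp

lemma uc_bound_le_Sfun (hC2 : 0 ≤ C2) (hδ0 : 0 < δ) (hδ1 : δ < 1) {r : ℝ} (hr : 0 < r) {j : ℕ}
    (hj : (j : ℝ) ≤ logb 2 r) :
    C1 / √r + C2 * √(log (1 / failureProb δ j) / r) ≤ Sfun C1 C2 r δ := by
  set A := log (π ^ 2 / (6 * δ))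
  have hA : 0 ≤ A := log_nonneg (by rw [le_div_iff₀ (by positivity)]; nlinarith [pi_gt_three])
  have hlogj : 0 ≤ log ((j : ℝ) + 1) := log_nonneg (by linarith [j.cast_nonneg (α := ℝ)])
  have hlogj' : log ((j : ℝ) + 1) ≤ log (logb 2 r + 10) := log_le_log (by positivity) (by linarith)
  have hlog : log (1 / failureProb δ j) = A + 2 * log ((j : ℝ) + 1) := by
    rw [failureProb, one_div_div, mul_comm, mul_div_assoc, log_mul (by positivity) (by positivity),
      log_pow]
    push_cast
    ring
  have hkey : √(A + 2 * log ((j : ℝ) + 1)) ≤ √(2 * A) + √(2 * log (logb 2 r + 10)) := by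
    refine (sqrt_add_le_sqrt_add_sqrt hA (by positivity)).trans (add_le_add ?_ ?_) <;>
      exact sqrt_le_sqrt (by linarith)
  unfold Sfun
  rw [hlog, sqrt_div (by positivity), sqrt_div (by linarith)]
  calc C1 / √r + C2 * (√(A + 2 * log ((j : ℝ) + 1)) / √r)
      = (C1 + C2 * √(A + 2 * log ((j : ℝ) + 1))) / √r := by ring
    _ ≤ (C1 + C2 * (√(2 * A) + √(2 * log (logb 2 r + 10)))) / √r := by gcongr
    _ = _ := by ring

end Rates

lemma ofReal_one_sub_sum_le_measure_biInter {Ω ι : Type*} [MeasurableSpace Ω] {μ : Measure Ω}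
    [IsProbabilityMeasure μ] (s : Finset ι) {A : ι → Set Ω} (hA : ∀ i ∈ s, MeasurableSet (A i))
    {ε : ι → ℝ} (hε : ∀ i ∈ s, 0 ≤ ε i) (h : ∀ i ∈ s, ENNReal.ofReal (1 - ε i) ≤ μ (A i)) :
    ENNReal.ofReal (1 - ∑ i ∈ s, ε i) ≤ μ (⋂ i ∈ s, A i) := by
  have hcompl : ∀ i ∈ s, μ (A i)ᶜ ≤ ENNReal.ofReal (ε i) := fun i hi =>
    calc μ (A i)ᶜ = 1 - μ (A i) := prob_compl_eq_one_sub (hA i hi)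
      _ ≤ 1 - ENNReal.ofReal (1 - ε i) := tsub_le_tsub_left (h i hi) 1
      _ ≤ ENNReal.ofReal (ε i) := by
        rw [tsub_le_iff_right, ← ENNReal.ofReal_one]
        exact (ENNReal.ofReal_le_ofReal (by linarith)).trans ENNReal.ofReal_add_le
  have hunion : μ (⋂ i ∈ s, A i)ᶜ ≤ ENNReal.ofReal (∑ i ∈ s, ε i) := by
    rw [Set.compl_iInter₂, ENNReal.ofReal_sum_of_nonneg hε]
    exact (measure_biUnion_finset_le s _).trans (Finset.sum_le_sum hcompl)
  have hmeas : MeasurableSet (⋂ i ∈ s, A i) := Finset.measurableSet_biInter s hA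
  calc ENNReal.ofReal (1 - ∑ i ∈ s, ε i)
      = 1 - ENNReal.ofReal (∑ i ∈ s, ε i) := by
        rw [ENNReal.ofReal_sub _ (Finset.sum_nonneg hε), ENNReal.ofReal_one]
    _ ≤ 1 - μ (⋂ i ∈ s, A i)ᶜ := tsub_le_tsub_left hunion 1
    _ = μ (⋂ i ∈ s, A i) := by simpa using (prob_compl_eq_one_sub hmeas.compl).symm

lemma avgMeas_eq_of_forall_eq {Z : Type*} [MeasurableSpace Z] {P : ℕ → Measure Z}
    {Q : Measure Z} {T r : ℕ} (hr : 1 ≤ r) (hrT : r ≤ T)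
    (hP : ∀ t ∈ Finset.Icc (T - r + 1) T, P t = Q) : avgMeas P T r = Q := by
  rw [avgMeas, Finset.sum_congr rfl hP, Finset.sum_const, Nat.card_Icc,
    show T + 1 - (T - r + 1) = r by omega, ← Nat.cast_smul_eq_nsmul ENNReal, smul_smul,
    ENNReal.inv_mul_cancel (by positivity) (ENNReal.natCast_ne_top r), one_smul]

section Empirical

variable {ι Z Ω : Type*} {F : ι → Z → ℝ} {Zs : ℕ → Ω → Z} {T : ℕ}

lemma abs_empAvg_le {f : Z → ℝ} {B : ℝ} (hB : 0 ≤ B) (hf : ∀ z, |f z| ≤ B) (r : ℕ) (ω : Ω) :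
    |empAvg Zs T r f ω| ≤ B := by
  rcases Nat.eq_zero_or_pos r with rfl | hr
  · simpa [empAvg] using hB
  have hcard : ((Finset.Icc (T - r + 1) T).card : ℝ) ≤ r := by
    rw [Nat.card_Icc]
    exact_mod_cast (by omega)
  calc |empAvg Zs T r f ω|
      ≤ (r : ℝ)⁻¹ * ∑ t ∈ Finset.Icc (T - r + 1) T, |f (Zs t ω)| := by
        rw [empAvg, abs_mul, abs_inv, Nat.abs_cast]
        gcongr
        exact Finset.abs_sum_le_sum_abs _ _
    _ ≤ (r : ℝ)⁻¹ * ((Finset.Icc (T - r + 1) T).card * B) := by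
        gcongr
        exact Finset.sum_le_card_nsmul _ _ _ (fun t _ => hf _) |>.trans_eq (nsmul_eq_mul _ _)
    _ ≤ (r : ℝ)⁻¹ * (r * B) := by gcongr
    _ = B := by field_simp

lemma bddAbove_range_abs_integral_sub_empAvg [MeasurableSpace Z] (Q : Measure Z)
    [IsProbabilityMeasure Q] {B : ℝ} (hF : ∀ n z, |F n z| ≤ B) (r : ℕ) (ω : Ω) :
    BddAbove (Set.range fun n => |(∫ z, F n z ∂Q) - empAvg Zs T r (F n) ω|) := by
  refine ⟨B + B, ?_⟩
  rintro _ ⟨n, rfl⟩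
  have hB : 0 ≤ B := (abs_nonneg _).trans (hF n (Zs 0 ω))
  have hint : |∫ z, F n z ∂Q| ≤ B := by
    simpa using norm_integral_le_of_norm_le_const (μ := Q)
      (Filter.Eventually.of_forall fun z => (Real.norm_eq_abs _).trans_le (hF n z))
  exact (abs_sub _ _).trans (add_le_add hint (abs_empAvg_le hB (hF n) r ω))

lemma dEE_le_dPE_add_dPE [MeasurableSpace Z] [Nonempty ι] (Q : Measure Z)
    [IsProbabilityMeasure Q] {B : ℝ} (hF : ∀ n z, |F n z| ≤ B) (r s : ℕ) (ω : Ω) :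
    dEE F Zs T r s ω ≤ dPE F Q Zs T r ω + dPE F Q Zs T s ω := by
  refine ciSup_le fun n => ?_
  calc |empAvg Zs T r (F n) ω - empAvg Zs T s (F n) ω|
      ≤ |(∫ z, F n z ∂Q) - empAvg Zs T r (F n) ω| + |(∫ z, F n z ∂Q) - empAvg Zs T s (F n) ω| := by
        have h := abs_sub_le (empAvg Zs T r (F n) ω) (∫ z, F n z ∂Q) (empAvg Zs T s (F n) ω)
        rwa [abs_sub_comm (empAvg Zs T r (F n) ω) (∫ z, F n z ∂Q)] at h
    _ ≤ dPE F Q Zs T r ω + dPE F Q Zs T s ω :=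
        add_le_add (le_ciSup (bddAbove_range_abs_integral_sub_empAvg Q hF r ω) n)
          (le_ciSup (bddAbove_range_abs_integral_sub_empAvg Q hF s ω) n)

lemma measurable_dPE [MeasurableSpace Z] [MeasurableSpace Ω] [Countable ι]
    (hF : ∀ n, Measurable (F n)) (hZ : ∀ t, Measurable (Zs t)) (Q : Measure Z) (r : ℕ) :
    Measurable (dPE F Q Zs T r) :=
  Measurable.iSup fun n => (measurable_const.sub (measurable_const.mul
    (Finset.measurable_sum _ fun t _ => (hF n).comp (hZ t)))).abs

end Empirical

section Algorithm

variable {ι Z Ω : Type*} {F : ι → Z → ℝ} {Zs : ℕ → Ω → Z} {T : ℕ} {C1 C2 δ : ℝ}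

lemma two_pow_le_of_forall_lt_not_stopCond {ω : Ω} {jh : ℕ} (hT : 1 ≤ T)
    (hmin : ∀ j < jh, ¬ stopCond F Zs T C1 C2 δ j ω) : 2 ^ jh ≤ T := by
  rcases Nat.eq_zero_or_pos jh with rfl | hpos
  · simpa using hT
  · have h := hmin (jh - 1) (by omega)
    rw [stopCond, not_or, Nat.sub_add_cancel hpos] at h
    exact not_lt.1 h.1

variable [MeasurableSpace Z]

lemma lt_two_pow_succ_of_stopCond [Nonempty ι] {Q : Measure Z} [IsProbabilityMeasure Q] {B : ℝ}
    (hC1 : 0 ≤ C1) (hC2 : 0 ≤ C2) (hF : ∀ n z, |F n z| ≤ B) {ω : Ω}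
    (hgood : ∀ j, 2 ^ j ≤ T → dPE F Q Zs T (2 ^ j) ω ≤ Sfun C1 C2 (2 ^ j : ℕ) δ) {jh : ℕ}
    (hstop : stopCond F Zs T C1 C2 δ jh ω) (hjh : 2 ^ jh ≤ T) : T < 2 ^ (jh + 1) := by
  by_contra! hfits
  have hcast : ((2 ^ (jh + 1) : ℕ) : ℝ) = 2 * ((2 ^ jh : ℕ) : ℝ) := by push_cast; ring
  have hsmall := hgood jh hjh
  have hlarge := hgood (jh + 1) hfits
  rw [hcast] at hlarge
  have hS := Sfun_two_mul_le (δ := δ) hC1 hC2 (r := ((2 ^ jh : ℕ) : ℝ))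
    (by exact_mod_cast Nat.one_le_two_pow)
  have htest := dEE_le_dPE_add_dPE (Zs := Zs) (T := T) Q hF (2 ^ jh) (2 ^ (jh + 1)) ω
  rcases hstop with hT | hT
  · omega
  · linarith [Sfun_nonneg (δ := δ) hC1 hC2 ((2 ^ jh : ℕ) : ℝ)]

lemma dPE_two_pow_le_of_stopCond [Nonempty ι] {Q : Measure Z} [IsProbabilityMeasure Q] {B : ℝ}
    (hC1 : 0 ≤ C1) (hC2 : 0 ≤ C2) (hF : ∀ n z, |F n z| ≤ B) (hT : 1 ≤ T) {ω : Ω}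
    (hgood : ∀ j, 2 ^ j ≤ T → dPE F Q Zs T (2 ^ j) ω ≤ Sfun C1 C2 (2 ^ j : ℕ) δ) {jh : ℕ}
    (hstop : stopCond F Zs T C1 C2 δ jh ω) (hmin : ∀ j < jh, ¬ stopCond F Zs T C1 C2 δ j ω) :
    dPE F Q Zs T (2 ^ jh) ω ≤ 2 * Sfun C1 C2 T δ := by
  have hjh := two_pow_le_of_forall_lt_not_stopCond hT hmin
  have hlt := lt_two_pow_succ_of_stopCond hC1 hC2 hF hgood hstop hjh
  refine (hgood jh hjh).trans (Sfun_le_two_mul_Sfun hC1 hC2 ?_ ?_ ?_)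
  · exact_mod_cast Nat.one_le_two_pow
  · exact_mod_cast hjh
  · rw [pow_succ] at hlt
    exact_mod_cast (by omega : T ≤ 4 * 2 ^ jh)

lemma ofReal_one_sub_le_measure_forall_dPE_two_pow_le [MeasurableSpace Ω] [Countable ι]
    {μ : Measure Ω} [IsProbabilityMeasure μ] (hF : ∀ n, Measurable (F n))
    (hZ : ∀ t, Measurable (Zs t)) {Q : Measure Z} (hT : 1 ≤ T) (hC2 : 0 ≤ C2) (hδ0 : 0 < δ)
    (hδ1 : δ < 1)
    (hUC : ∀ r : ℕ, 1 ≤ r → r ≤ T → ∀ δ' : ℝ, 0 < δ' → δ' < 1 →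
      ENNReal.ofReal (1 - δ') ≤ μ {ω | dPE F Q Zs T r ω ≤
        C1 / Real.sqrt r + C2 * Real.sqrt (Real.log (1 / δ') / r)}) :
    ENNReal.ofReal (1 - δ) ≤
      μ {ω | ∀ j, 2 ^ j ≤ T → dPE F Q Zs T (2 ^ j) ω ≤ Sfun C1 C2 (2 ^ j : ℕ) δ} := by
  set K := Nat.log 2 T + 1
  set good : ℕ → Set Ω := fun j => {ω | dPE F Q Zs T (2 ^ j) ω ≤ Sfun C1 C2 (2 ^ j : ℕ) δ}
  have hwindow : ∀ j ∈ Finset.range K, 2 ^ j ≤ T := fun j hj =>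
    Nat.pow_le_of_le_log (by omega) (Nat.lt_succ_iff.1 (Finset.mem_range.1 hj))
  have hsingle : ∀ j ∈ Finset.range K, ENNReal.ofReal (1 - failureProb δ j) ≤ μ (good j) := by
    intro j hj
    refine (hUC (2 ^ j) Nat.one_le_two_pow (hwindow j hj) _ (failureProb_pos hδ0 j)
      (failureProb_lt_one hδ0 hδ1 j)).trans (measure_mono fun ω hω => ?_)
    refine le_trans hω (uc_bound_le_Sfun hC2 hδ0 hδ1 (by positivity) ?_)
    push_cast
    rw [Real.logb_pow, Real.logb_self_eq_one one_lt_two, mul_one]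
  calc ENNReal.ofReal (1 - δ) ≤ ENNReal.ofReal (1 - ∑ j ∈ Finset.range K, failureProb δ j) :=
        ENNReal.ofReal_le_ofReal (by linarith [sum_failureProb_le hδ0.le K])
    _ ≤ μ (⋂ j ∈ Finset.range K, good j) :=
        ofReal_one_sub_sum_le_measure_biInter _
          (fun j _ => measurableSet_le (measurable_dPE hF hZ Q _) measurable_const)
          (fun j _ => (failureProb_pos hδ0 j).le) hsingle
    _ ≤ _ := measure_mono fun ω hω j hj => Set.mem_iInter₂.1 hω j
        (Finset.mem_range.2 (Nat.lt_succ_of_le (Nat.le_log_of_pow_le one_lt_two hj)))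

end Algorithm

theorem stmt7_general {Z Ω : Type*} [mZ : MeasurableSpace Z] [MeasurableSpace Ω]
    (μ : Measure Ω) [IsProbabilityMeasure μ]
    (F : ℕ → Z → ℝ) (hFmeas : ∀ n, Measurable (F n))
    (B : ℝ) (hFbdd : ∀ n z, |F n z| ≤ B)
    (T : ℕ) (hT : 1 ≤ T) (P : ℕ → Measure Z)
    (hP : ∀ t, IsProbabilityMeasure (P t))
    (Zs : ℕ → Ω → Z) (hZmeas : ∀ t, Measurable (Zs t))
    (C1 C2 : ℝ) (hC1 : 0 ≤ C1) (hC2 : 0 ≤ C2)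
    (hUC : ∀ r : ℕ, 1 ≤ r → r ≤ T → ∀ δ' : ℝ, 0 < δ' → δ' < 1 →
      ENNReal.ofReal (1 - δ') ≤ μ {ω | dPE F (avgMeas P T r) Zs T r ω ≤
        C1 / Real.sqrt r + C2 * Real.sqrt (Real.log (1 / δ') / r)})
    (δ : ℝ) (hδ0 : 0 < δ) (hδ1 : δ < 1)
    (hiid : ∀ s ∈ Finset.Icc 1 T, ∀ t ∈ Finset.Icc 1 T, P s = P t)
    (jhat : Ω → ℕ)
    (hjhat : ∀ ω, stopCond F Zs T C1 C2 δ (jhat ω) ω ∧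
      ∀ j < jhat ω, ¬ stopCond F Zs T C1 C2 δ j ω) :
    ENNReal.ofReal (1 - δ) ≤
      μ {ω | dPE F (P T) Zs T (2 ^ jhat ω) ω ≤ 462 * Sfun C1 C2 (T : ℕ) δ} := by
  have hwindow : ∀ r : ℕ, 1 ≤ r → r ≤ T → avgMeas P T r = P T := fun r hr hrT =>
    avgMeas_eq_of_forall_eq hr hrT fun t ht => by
      rw [Finset.mem_Icc] at ht
      exact hiid t (Finset.mem_Icc.2 ⟨by omega, ht.2⟩) T (Finset.mem_Icc.2 ⟨hT, le_rfl⟩)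
  have hUC' : ∀ r : ℕ, 1 ≤ r → r ≤ T → ∀ δ' : ℝ, 0 < δ' → δ' < 1 →
      ENNReal.ofReal (1 - δ') ≤ μ {ω | dPE F (P T) Zs T r ω ≤
        C1 / Real.sqrt r + C2 * Real.sqrt (Real.log (1 / δ') / r)} := fun r hr hrT =>
    hwindow r hr hrT ▸ hUC r hr hrT
  have := hP T
  refine (ofReal_one_sub_le_measure_forall_dPE_two_pow_le hFmeas hZmeas hT hC2 hδ0 hδ1 hUC').trans
    (measure_mono fun ω hgood => ?_)
  obtain ⟨hstop, hmin⟩ := hjhat ω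
  have hbound := dPE_two_pow_le_of_stopCond hC1 hC2 hFbdd hT hgood hstop hmin
  show dPE F (P T) Zs T (2 ^ jhat ω) ω ≤ 462 * Sfun C1 C2 (T : ℕ) δ
  linarith [Sfun_nonneg (δ := δ) hC1 hC2 T]

/-- the i.i.d. case `P_1 = ⋯ = P_T`. If `ĵ(ω)` is the least `j` at which
the algorithm stops and `r̂ = 2^ĵ`, then with probability at least `1 − δ`,
`‖P_T − 𝔔_T^{r̂}‖_F ≤ 462·S(T, δ)`. -/
theorem stmt7 {Z Ω : Type*} [mZ : MeasurableSpace Z] [MeasurableSpace Ω]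
    (μ : Measure Ω) [IsProbabilityMeasure μ]
    (F : ℕ → Z → ℝ) (hFmeas : ∀ n, Measurable (F n))
    (B : ℝ) (hFbdd : ∀ n z, |F n z| ≤ B)
    (T : ℕ) (hT : 1 ≤ T) (P : ℕ → Measure Z)
    (hP : ∀ t, IsProbabilityMeasure (P t))
    (Zs : ℕ → Ω → Z) (hZmeas : ∀ t, Measurable (Zs t))
    (hindep : iIndepFun Zs μ)
    (hdist : ∀ t ∈ Finset.Icc 1 T, μ.map (Zs t) = P t)
    (C1 C2 : ℝ) (hC1 : 0 ≤ C1) (hC2 : 0 ≤ C2)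
    (hUC : ∀ r : ℕ, 1 ≤ r → r ≤ T → ∀ δ' : ℝ, 0 < δ' → δ' < 1 →
      ENNReal.ofReal (1 - δ') ≤ μ {ω | dPE F (avgMeas P T r) Zs T r ω ≤
        C1 / Real.sqrt r + C2 * Real.sqrt (Real.log (1 / δ') / r)})
    (δ : ℝ) (hδ0 : 0 < δ) (hδ1 : δ < 1)
    (hiid : ∀ s ∈ Finset.Icc 1 T, ∀ t ∈ Finset.Icc 1 T, P s = P t)
    (jhat : Ω → ℕ)
    (hjhat : ∀ ω, stopCond F Zs T C1 C2 δ (jhat ω) ω ∧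
      ∀ j < jhat ω, ¬ stopCond F Zs T C1 C2 δ j ω) :
    ENNReal.ofReal (1 - δ) ≤
      μ {ω | dPE F (P T) Zs T (2 ^ jhat ω) ω ≤ 462 * Sfun C1 C2 (T : ℕ) δ} :=
  stmt7_general (mZ := mZ) μ F hFmeas B hFbdd T hT P hP Zs hZmeas C1 C2 hC1 hC2 hUC δ hδ0 hδ1 hiid
    jhat hjhat
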